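/- arXiv:2403.17139 — 2 statements merged into one kernel-verified Lean document; each statement's English description precedes it below -/
import Mathlib

section
/- Let K ≥ 2 be even, let m ≥ 1 be an integer, set N = mK, and let α ∈ [0,1]. Suppose σ^A is a mixed strategy whose marginal distribution at every battlefield is uniform on the odd integers {1, 3, …, 2m−1}, and σ^B is a mixed strategy whose marginal distribution at every battlefield is uniform on the even integers {0, 2, …, 2m}. Then (σ^A, σ^B) is a Nash equilibrium of the Colonel Blotto game B_α(N,K), and each player's expected payoff equals K/2. -/
open Finset

/-- The set of pure strategies: allocations of `N` units of the resource
over `K` battlefields. -/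
def pureStrats (K N : ℕ) : Finset (Fin K → ℕ) := Finset.Nat.antidiagonalTuple K N

/-- Payoff in the Colonel Blotto game `B_α(N,K)` of playing `s` against `t`:
`π(s,t) = Σ_k [1_{s_k > t_k} + (α/2)·1_{s_k = t_k}]`. -/
noncomputable def payoff (α : ℝ) {K : ℕ} (s t : Fin K → ℕ) : ℝ :=
  ∑ k, ((if t k < s k then (1 : ℝ) else 0) + α / 2 * (if s k = t k then 1 else 0))

/-- `σ` is a mixed strategy: a probability distribution on the pure strategies. -/
def IsMixed (K N : ℕ) (σ : (Fin K → ℕ) → ℝ) : Prop :=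
  (∀ s, 0 ≤ σ s) ∧ (∀ s, s ∉ pureStrats K N → σ s = 0) ∧
    ∑ s ∈ pureStrats K N, σ s = 1

/-- Expected payoff of the mixed strategy `σ` against the mixed strategy `τ`. -/
noncomputable def expPayoff (α : ℝ) (K N : ℕ) (σ τ : (Fin K → ℕ) → ℝ) : ℝ :=
  ∑ s ∈ pureStrats K N, ∑ t ∈ pureStrats K N, σ s * τ t * payoff α s t

/-- `(σA, σB)` is a mixed-strategy Nash equilibrium: both are mixed strategies and
neither player can strictly improve by a unilateral deviation. -/
def IsNashEq (α : ℝ) (K N : ℕ) (σA σB : (Fin K → ℕ) → ℝ) : Prop :=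
  IsMixed K N σA ∧ IsMixed K N σB ∧
    (∀ σ', IsMixed K N σ' → expPayoff α K N σ' σB ≤ expPayoff α K N σA σB) ∧
    (∀ τ', IsMixed K N τ' → expPayoff α K N τ' σA ≤ expPayoff α K N σB σA)

/-- The marginal distribution of `σ` at battlefield `k`, evaluated at `x`. -/
noncomputable def marginal (K N : ℕ) (σ : (Fin K → ℕ) → ℝ) (k : Fin K) (x : ℕ) : ℝ :=
  ∑ s ∈ (pureStrats K N).filter (fun s => s k = x), σ s

/-- `σ` induces uniform marginals on `{0,1,…,2m}` at every battlefield. -/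
def UniformMarginals (K N m : ℕ) (σ : (Fin K → ℕ) → ℝ) : Prop :=
  ∀ k x, marginal K N σ k x = if x ≤ 2 * m then (1 : ℝ) / (2 * m + 1) else 0

/-- `σ`'s marginal at every battlefield is uniform on the odd integers `{1,3,…,2m-1}`. -/
def OddUniformMarginals (K N m : ℕ) (σ : (Fin K → ℕ) → ℝ) : Prop :=
  ∀ k x, marginal K N σ k x = if x % 2 = 1 ∧ x < 2 * m then (1 : ℝ) / m else 0

/-- `σ`'s marginal at every battlefield is uniform on the even integers `{0,2,…,2m}`. -/
def EvenUniformMarginals (K N m : ℕ) (σ : (Fin K → ℕ) → ℝ) : Prop :=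
  ∀ k x, marginal K N σ k x = if x % 2 = 0 ∧ x ≤ 2 * m then (1 : ℝ) / (m + 1) else 0

/-! Against the even-uniform strategy, a pure allocation `s` earns at battlefield `k` at most
`(s k + 1) / (2 (m + 1))`: it beats the `⌈s k / 2⌉` even levels below `s k` and, since
`α ≤ 1`, a tie is worth at most `1/2`. Summed over the battlefields this is
`(N + K) / (2 (m + 1)) = K / 2`. Likewise against the odd-uniform strategy `s` earns at most
`s k / (2 m)` per battlefield, hence at most `N / (2 m) = K / 2` in total. So neither player
gains more than `K / 2` by deviating. Odd and even allocations never tie, so each battlefield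
is won by exactly one player and the two equilibrium payoffs add up to `K`; both are
therefore `K / 2`. -/

noncomputable def fieldPayoff (α : ℝ) (x y : ℕ) : ℝ :=
  (if y < x then 1 else 0) + α / 2 * (if x = y then 1 else 0)

theorem payoff_eq_sum_fieldPayoff (α : ℝ) {K : ℕ} (s t : Fin K → ℕ) :
    payoff α s t = ∑ k, fieldPayoff α (s k) (t k) := rfl

theorem fieldPayoff_add_fieldPayoff_swap {x y : ℕ} (α : ℝ) (h : x ≠ y) :
    fieldPayoff α x y + fieldPayoff α y x = 1 := by
  rcases h.lt_or_gt with hxy | hxy <;>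
    simp [fieldPayoff, hxy, hxy.not_gt, hxy.ne, hxy.ne']

theorem sum_fieldPayoff (α : ℝ) (Y : Finset ℕ) (x : ℕ) :
    ∑ y ∈ Y, fieldPayoff α x y = #{y ∈ Y | y < x} + α / 2 * (if x ∈ Y then 1 else 0) := by
  rw [← sum_ite_eq Y x fun _ => (1 : ℝ), mul_sum, ← sum_boole, ← sum_add_distrib]
  rfl

theorem two_mul_card_filter_lt_add_le {Y : Finset ℕ} {r : ℕ} (hr : r ≤ 1)
    (hY : ∀ y ∈ Y, y % 2 = r) (x : ℕ) :
    2 * #{y ∈ Y | y < x} + (if x ∈ Y then 1 else 0) + r ≤ x + 1 := by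
  have hinj : Set.InjOn (· / 2) (({y ∈ Y | y < x} : Finset ℕ) : Set ℕ) := by
    intro a ha b hb hab
    have := hY a (mem_filter.mp ha).1
    have := hY b (mem_filter.mp hb).1
    simp only at hab
    omega
  have hcard : ∀ b, (∀ y ∈ Y, y < x → y / 2 < b) → #{y ∈ Y | y < x} ≤ b := fun b hb => by
    simpa using card_le_card_of_injOn (t := range b) (· / 2)
      (fun y hy => mem_range.mpr (hb y (mem_filter.mp hy).1 (mem_filter.mp hy).2)) hinj
  by_cases hx : x ∈ Y
  · have hxr := hY x hx
    have := hcard (x / 2) fun y hy hyx => by have := hY y hy; omega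
    rw [if_pos hx]
    omega
  · have := hcard ((x + 1 - r) / 2) fun y hy hyx => by have := hY y hy; omega
    rw [if_neg hx]
    omega

theorem sum_fieldPayoff_le {α : ℝ} (hα : α ≤ 1) {Y : Finset ℕ} {r : ℕ} (hr : r ≤ 1)
    (hY : ∀ y ∈ Y, y % 2 = r) (x : ℕ) :
    ∑ y ∈ Y, fieldPayoff α x y ≤ ((x : ℝ) + 1 - r) / 2 := by
  have hcount : 2 * (#{y ∈ Y | y < x} : ℝ) + (if x ∈ Y then 1 else 0) + r ≤ x + 1 := by
    exact_mod_cast two_mul_card_filter_lt_add_le hr hY x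
  have htie : α / 2 * (if x ∈ Y then (1 : ℝ) else 0) ≤ 1 / 2 * (if x ∈ Y then 1 else 0) := by
    gcongr
  rw [sum_fieldPayoff]
  linarith

section Marginals

variable {K N : ℕ}

theorem sum_mul_apply_eq_sum_marginal (σ : (Fin K → ℕ) → ℝ) (k : Fin K) (F : ℕ → ℝ) :
    ∑ s ∈ pureStrats K N, σ s * F (s k) =
      ∑ x ∈ range (N + 1), marginal K N σ k x * F x := by
  have hmaps : ∀ s ∈ pureStrats K N, s k ∈ range (N + 1) := fun s hs => by
    rw [pureStrats, Nat.mem_antidiagonalTuple] at hs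
    exact mem_range_succ_iff.mpr (hs ▸ single_le_sum (fun i _ => Nat.zero_le (s i)) (mem_univ k))
  rw [← sum_fiberwise_of_maps_to hmaps]
  refine sum_congr rfl fun x _ => ?_
  rw [marginal, sum_mul]
  exact sum_congr rfl fun s hs => by rw [(mem_filter.mp hs).2]

theorem IsMixed.sum_marginal {σ : (Fin K → ℕ) → ℝ} (hσ : IsMixed K N σ) (k : Fin K) :
    ∑ x ∈ range (N + 1), marginal K N σ k x = 1 := by
  have h := sum_mul_apply_eq_sum_marginal (N := N) σ k fun _ => 1
  simp only [mul_one] at h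
  rw [← h, hσ.2.2]

theorem sum_mul_payoff_eq_sum_marginal (α : ℝ) (τ : (Fin K → ℕ) → ℝ) (s : Fin K → ℕ) :
    ∑ t ∈ pureStrats K N, τ t * payoff α s t =
      ∑ k, ∑ y ∈ range (N + 1), marginal K N τ k y * fieldPayoff α (s k) y := by
  simp only [payoff_eq_sum_fieldPayoff, mul_sum]
  rw [sum_comm]
  exact sum_congr rfl fun k _ => sum_mul_apply_eq_sum_marginal τ k (fieldPayoff α (s k))

theorem expPayoff_eq_sum_mul_sum (α : ℝ) (σ τ : (Fin K → ℕ) → ℝ) :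
    expPayoff α K N σ τ =
      ∑ s ∈ pureStrats K N, σ s * ∑ t ∈ pureStrats K N, τ t * payoff α s t := by
  simp only [expPayoff, mul_sum, mul_assoc]

theorem expPayoff_eq_sum_marginal (α : ℝ) (σ τ : (Fin K → ℕ) → ℝ) :
    expPayoff α K N σ τ = ∑ k, ∑ x ∈ range (N + 1), ∑ y ∈ range (N + 1),
      marginal K N σ k x * marginal K N τ k y * fieldPayoff α x y := by
  calc expPayoff α K N σ τ
      = ∑ s ∈ pureStrats K N, σ s * ∑ t ∈ pureStrats K N, τ t * payoff α s t :=
        expPayoff_eq_sum_mul_sum α σ τ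
    _ = ∑ k, ∑ s ∈ pureStrats K N, σ s *
          ∑ y ∈ range (N + 1), marginal K N τ k y * fieldPayoff α (s k) y := by
        simp only [sum_mul_payoff_eq_sum_marginal, mul_sum]
        exact sum_comm
    _ = _ := by
        refine sum_congr rfl fun k _ => (sum_mul_apply_eq_sum_marginal σ k
          fun x => ∑ y ∈ range (N + 1), marginal K N τ k y * fieldPayoff α x y).trans ?_
        simp only [mul_sum, mul_assoc]

/-- Without ties every battlefield is won by exactly one of the two players. -/
theorem expPayoff_add_expPayoff_swap {σ τ : (Fin K → ℕ) → ℝ} (hσ : IsMixed K N σ)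
    (hτ : IsMixed K N τ) (hdisj : ∀ k x, marginal K N σ k x = 0 ∨ marginal K N τ k x = 0)
    (α : ℝ) : expPayoff α K N σ τ + expPayoff α K N τ σ = K := by
  have hterm : ∀ k x y, marginal K N σ k x * marginal K N τ k y *
      (fieldPayoff α x y + fieldPayoff α y x) = marginal K N σ k x * marginal K N τ k y := by
    intro k x y
    rcases eq_or_ne x y with rfl | hxy
    · rcases hdisj k x with h | h <;> simp [h]
    · rw [fieldPayoff_add_fieldPayoff_swap α hxy, mul_one]
  have hk : ∀ k, ∑ x ∈ range (N + 1), ∑ y ∈ range (N + 1),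
      marginal K N σ k x * marginal K N τ k y * (fieldPayoff α x y + fieldPayoff α y x) = 1 := by
    intro k
    simp only [hterm, ← sum_mul_sum, hσ.sum_marginal, hτ.sum_marginal, mul_one]
  rw [expPayoff_eq_sum_marginal, expPayoff_eq_sum_marginal, ← sum_add_distrib]
  conv_lhs =>
    enter [2, k, 2]
    rw [sum_comm (f := fun x y => marginal K N τ k x * marginal K N σ k y * _)]
  simp only [← sum_add_distrib, mul_comm (marginal K N τ _ _), ← mul_add, hk, sum_const,
    card_univ, Fintype.card_fin, nsmul_eq_mul, mul_one]

theorem expPayoff_le_of_forall_pure_le {α v : ℝ} {σ τ : (Fin K → ℕ) → ℝ} (hσ : IsMixed K N σ)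
    (h : ∀ s ∈ pureStrats K N, ∑ t ∈ pureStrats K N, τ t * payoff α s t ≤ v) :
    expPayoff α K N σ τ ≤ v :=
  calc expPayoff α K N σ τ
      = ∑ s ∈ pureStrats K N, σ s * ∑ t ∈ pureStrats K N, τ t * payoff α s t :=
        expPayoff_eq_sum_mul_sum α σ τ
    _ ≤ ∑ s ∈ pureStrats K N, σ s * v :=
        sum_le_sum fun s hs => mul_le_mul_of_nonneg_left (h s hs) (hσ.1 s)
    _ = v := by rw [← sum_mul, hσ.2.2, one_mul]

theorem sum_mul_payoff_le_of_marginal_eq_ite {α : ℝ} (hα : α ≤ 1) {τ : (Fin K → ℕ) → ℝ}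
    {Y : Finset ℕ} {c : ℝ} {r : ℕ} (hτ : ∀ k y, marginal K N τ k y = if y ∈ Y then c else 0)
    (hc : 0 ≤ c) (hYN : Y ⊆ range (N + 1)) (hr : r ≤ 1) (hY : ∀ y ∈ Y, y % 2 = r)
    {s : Fin K → ℕ} (hs : s ∈ pureStrats K N) :
    ∑ t ∈ pureStrats K N, τ t * payoff α s t ≤ c * ((N + K * (1 - r)) / 2) := by
  have hfield : ∀ k, ∑ y ∈ range (N + 1), marginal K N τ k y * fieldPayoff α (s k) y =
      c * ∑ y ∈ Y, fieldPayoff α (s k) y := fun k => by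
    simp only [hτ, ite_mul, zero_mul, ← sum_filter, filter_mem_eq_inter,
      inter_eq_right.mpr hYN, mul_sum]
  have hsum : ∑ k, ((s k : ℝ) + 1 - r) / 2 = (N + K * (1 - r)) / 2 := by
    rw [pureStrats, Nat.mem_antidiagonalTuple] at hs
    simp only [← sum_div, add_sub_assoc, sum_add_distrib, ← Nat.cast_sum, hs, sum_const,
      card_univ, Fintype.card_fin, nsmul_eq_mul]
  rw [sum_mul_payoff_eq_sum_marginal, ← hsum, mul_sum]
  exact sum_le_sum fun k _ => hfield k ▸
    mul_le_mul_of_nonneg_left (sum_fieldPayoff_le hα hr hY (s k)) hc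

end Marginals

theorem EvenUniformMarginals.marginal_eq_ite {K N m : ℕ} {σ : (Fin K → ℕ) → ℝ}
    (h : EvenUniformMarginals K N m σ) (k : Fin K) (x : ℕ) :
    marginal K N σ k x =
      if x ∈ {y ∈ range (2 * m + 1) | y % 2 = 0} then 1 / ((m : ℝ) + 1) else 0 := by
  simp only [h k x, mem_filter, mem_range, Nat.lt_succ_iff, and_comm]

theorem OddUniformMarginals.marginal_eq_ite {K N m : ℕ} {σ : (Fin K → ℕ) → ℝ}
    (h : OddUniformMarginals K N m σ) (k : Fin K) (x : ℕ) :
    marginal K N σ k x = if x ∈ {y ∈ range (2 * m) | y % 2 = 1} then 1 / (m : ℝ) else 0 := by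
  simp only [h k x, mem_filter, mem_range, and_comm]

theorem stmt15_general (K m N : ℕ) (hK : 2 ≤ K) (hm : 1 ≤ m) (hN : N = m * K)
    (α : ℝ) (hα : α ∈ Set.Icc (0 : ℝ) 1)
    (σA σB : (Fin K → ℕ) → ℝ) (hA : IsMixed K N σA) (hB : IsMixed K N σB)
    (hAo : OddUniformMarginals K N m σA) (hBe : EvenUniformMarginals K N m σB) :
    IsNashEq α K N σA σB ∧
    expPayoff α K N σA σB = (K : ℝ) / 2 ∧
    expPayoff α K N σB σA = (K : ℝ) / 2 := by
  have h2mN : 2 * m ≤ N := hN ▸ Nat.mul_comm 2 m ▸ Nat.mul_le_mul_left m hK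
  have hNR : (N : ℝ) = m * K := by exact_mod_cast hN
  have hdevA : ∀ σ', IsMixed K N σ' → expPayoff α K N σ' σB ≤ K / 2 := fun σ' hσ' =>
    expPayoff_le_of_forall_pure_le hσ' fun _ hs => by
      refine (sum_mul_payoff_le_of_marginal_eq_ite hα.2 hBe.marginal_eq_ite (by positivity)
        (fun y hy => by simp only [mem_filter, mem_range] at hy ⊢; omega) zero_le_one
        (fun y hy => (mem_filter.mp hy).2) hs).trans_eq ?_
      field_simp
      push_cast
      rw [hNR]
      ring
  have hdevB : ∀ τ', IsMixed K N τ' → expPayoff α K N τ' σA ≤ K / 2 := fun τ' hτ' =>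
    expPayoff_le_of_forall_pure_le hτ' fun _ hs => by
      refine (sum_mul_payoff_le_of_marginal_eq_ite hα.2 hAo.marginal_eq_ite (by positivity)
        (fun y hy => by simp only [mem_filter, mem_range] at hy ⊢; omega) le_rfl
        (fun y hy => (mem_filter.mp hy).2) hs).trans_eq ?_
      field_simp
      rw [hNR]
      ring
  have hconst : expPayoff α K N σA σB + expPayoff α K N σB σA = K :=
    expPayoff_add_expPayoff_swap hA hB (fun k x => by
      rw [hAo k x, hBe k x]
      by_cases hx : x % 2 = 0 <;> simp [hx]) α
  have hAB := hdevA σA hA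
  have hBA := hdevB σB hB
  refine ⟨⟨hA, hB, fun σ' hσ' => ?_, fun τ' hτ' => ?_⟩, by linarith, by linarith⟩
  · linarith [hdevA σ' hσ']
  · linarith [hdevB τ' hτ']

theorem stmt15 (K m N : ℕ) (hK : 2 ≤ K) (hKeven : Even K) (hm : 1 ≤ m) (hN : N = m * K)
    (α : ℝ) (hα : α ∈ Set.Icc (0 : ℝ) 1)
    (σA σB : (Fin K → ℕ) → ℝ) (hA : IsMixed K N σA) (hB : IsMixed K N σB)
    (hAo : OddUniformMarginals K N m σA) (hBe : EvenUniformMarginals K N m σB) :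
    IsNashEq α K N σA σB ∧
    expPayoff α K N σA σB = (K : ℝ) / 2 ∧
    expPayoff α K N σB σA = (K : ℝ) / 2 :=
  stmt15_general K m N hK hm hN α hα σA σB hA hB hAo hBe
end

section
/- Let K ≥ 2 be even, let m ≥ 1 be an integer, and set N = mK. (i) If α ∈ [0,1), then for any mixed strategy σ whose marginal distribution at every battlefield is uniform on the even integers {0, 2, …, 2m}, the symmetric profile (σ, σ) is not a Nash equilibrium of the Colonel Blotto game B_α(N,K). (ii) If α ∈ (1,2], then for any mixed strategies σ^A with marginal uniform on the odd integers {1, 3, …, 2m−1} at every battlefield and σ^B with marginal uniform on the even integers {0, 2, …, 2m} at every battlefield, the profile (σ^A, σ^B) is not a Nash equilibrium of B_α(N,K). -/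
open Finset

/-!
On a battlefield contested by `x` against `y`, the two players' payoffs add up to `1` when
`x ≠ y` and to `α` when `x = y`. Hence the expected payoffs of any profile add up to
`K + (α - 1) · E[#ties]`, and both the number of ties and the payoff of a pure strategy against a
mixed one are expectations of separable functions, so they depend only on the marginals.

Against marginals uniform on `{0, 2, …, 2m}`, the pure strategy `(1, 2m-1, 1, 2m-1, …)` earns
`K/2` and `(0, 2m, 0, 2m, …)` earns `(K/2)(m + α)/(m + 1)`; against marginals uniform on
`{1, 3, …, 2m-1}`, `(2m, 0, 2m, 0, …)` earns `K/2`. In (i) ties occur with positive probability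
and `α < 1`, so the symmetric equilibrium payoff would be below `K/2`. In (ii) ties are impossible,
so the two payoffs add up to `K`, whereas the deviations guarantee `A` more than `K/2` and `B` at
least `K/2`.
-/

namespace Blotto

variable {K N : ℕ}

lemma mem_pureStrats {s : Fin K → ℕ} : s ∈ pureStrats K N ↔ ∑ k, s k = N :=
  Finset.Nat.mem_antidiagonalTuple

lemma apply_mem_range_of_mem_pureStrats {s : Fin K → ℕ} (hs : s ∈ pureStrats K N)
    (k : Fin K) : s k ∈ range (N + 1) := by
  rw [mem_range, Nat.lt_succ_iff, ← mem_pureStrats.1 hs]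
  exact single_le_sum (fun i _ => Nat.zero_le (s i)) (mem_univ k)

theorem sum_mul_sum_eq_sum_marginal (τ : (Fin K → ℕ) → ℝ) (f : Fin K → ℕ → ℝ) :
    ∑ t ∈ pureStrats K N, τ t * ∑ k, f k (t k) =
      ∑ k, ∑ y ∈ range (N + 1), marginal K N τ k y * f k y := by
  simp_rw [mul_sum]
  rw [sum_comm]
  refine sum_congr rfl fun k _ => ?_
  rw [← sum_fiberwise_of_maps_to fun t ht => apply_mem_range_of_mem_pureStrats ht k]
  refine sum_congr rfl fun y _ => ?_
  rw [marginal, sum_mul]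
  exact sum_congr rfl fun t ht => by rw [(mem_filter.1 ht).2]

theorem sum_sum_mul_sum_eq_sum_marginal (σ τ : (Fin K → ℕ) → ℝ)
    (g : Fin K → ℕ → ℕ → ℝ) :
    ∑ s ∈ pureStrats K N, ∑ t ∈ pureStrats K N, σ s * τ t * ∑ k, g k (s k) (t k) =
      ∑ k, ∑ x ∈ range (N + 1), ∑ y ∈ range (N + 1),
        marginal K N σ k x * marginal K N τ k y * g k x y := by
  simp_rw [mul_assoc, ← mul_sum, sum_mul_sum_eq_sum_marginal τ]
  rw [sum_mul_sum_eq_sum_marginal σ fun k x =>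
    ∑ y ∈ range (N + 1), marginal K N τ k y * g k x y]

noncomputable def winTie (α : ℝ) (x y : ℕ) : ℝ :=
  (if y < x then 1 else 0) + α / 2 * (if x = y then 1 else 0)

lemma payoff_eq_sum_winTie (α : ℝ) (s t : Fin K → ℕ) :
    payoff α s t = ∑ k, winTie α (s k) (t k) := rfl

lemma winTie_add_winTie_swap (α : ℝ) (x y : ℕ) :
    winTie α x y + winTie α y x = 1 + (α - 1) * if x = y then 1 else 0 := by
  unfold winTie
  rcases lt_trichotomy x y with h | rfl | h
  · simp [h, h.ne, h.ne', h.not_gt]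
  · simp only [lt_irrefl, if_true, if_false]
    ring
  · simp [h, h.ne, h.ne', h.not_gt]

noncomputable def battleValue (α : ℝ) (K N : ℕ) (τ : (Fin K → ℕ) → ℝ) (k : Fin K) (x : ℕ) :
    ℝ :=
  ∑ y ∈ range (N + 1), marginal K N τ k y * winTie α x y

lemma isMixed_pi_single {s : Fin K → ℕ} (hs : s ∈ pureStrats K N) :
    IsMixed K N (Pi.single s 1) := by
  refine ⟨fun t => ?_, fun t ht => Pi.single_eq_of_ne (ne_of_mem_of_not_mem hs ht).symm _, ?_⟩
  · rcases eq_or_ne t s with rfl | h <;> simp [*]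
  · simp [hs]

lemma expPayoff_pi_single (α : ℝ) {s : Fin K → ℕ} (hs : s ∈ pureStrats K N)
    (τ : (Fin K → ℕ) → ℝ) :
    expPayoff α K N (Pi.single s 1) τ = ∑ k, battleValue α K N τ k (s k) := by
  rw [expPayoff, sum_eq_single_of_mem s hs fun t _ ht => by simp [ht]]
  simp only [Pi.single_eq_same, one_mul, payoff_eq_sum_winTie]
  exact sum_mul_sum_eq_sum_marginal τ _

noncomputable def expTies (K N : ℕ) (σ τ : (Fin K → ℕ) → ℝ) : ℝ :=
  ∑ k, ∑ x ∈ range (N + 1), marginal K N σ k x * marginal K N τ k x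

theorem expPayoff_add_expPayoff_swap (α : ℝ) {σ τ : (Fin K → ℕ) → ℝ}
    (hσ : ∑ s ∈ pureStrats K N, σ s = 1) (hτ : ∑ t ∈ pureStrats K N, τ t = 1) :
    expPayoff α K N σ τ + expPayoff α K N τ σ = K + (α - 1) * expTies K N σ τ := by
  have hpair : ∀ s t : Fin K → ℕ, payoff α s t + payoff α t s =
      K + (α - 1) * ∑ k, if s k = t k then 1 else 0 := fun s t => by
    rw [payoff_eq_sum_winTie, payoff_eq_sum_winTie, ← sum_add_distrib]
    simp only [winTie_add_winTie_swap, sum_add_distrib, ← mul_sum, sum_const, card_univ,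
      Fintype.card_fin, nsmul_eq_mul, mul_one]
  have hties := sum_sum_mul_sum_eq_sum_marginal (N := N) σ τ fun _ x y => if x = y then 1 else 0
  simp only [mul_ite, mul_one, mul_zero, sum_ite_eq, sum_ite_mem, inter_self] at hties
  have hswap : expPayoff α K N τ σ =
      ∑ s ∈ pureStrats K N, ∑ t ∈ pureStrats K N, σ s * τ t * payoff α t s := by
    rw [expPayoff, sum_comm]
    simp_rw [mul_comm (τ _) (σ _)]
  rw [expPayoff, hswap, ← sum_add_distrib]
  simp_rw [← sum_add_distrib, ← mul_add, hpair, mul_add, sum_add_distrib,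
    mul_left_comm _ (α - 1), ← mul_sum, hties, ← sum_mul, ← sum_mul_sum, hσ, hτ]
  rw [expTies]
  ring

noncomputable def valueAgainst (α : ℝ) (p : ℕ → ℝ) (x : ℕ) : ℝ :=
  ∑ y ∈ range x, p y + α / 2 * p x

lemma battleValue_eq_valueAgainst {α : ℝ} {τ : (Fin K → ℕ) → ℝ} {p : ℕ → ℝ}
    (hτ : ∀ k x, marginal K N τ k x = p x) (k : Fin K) {x : ℕ} (hx : x ∈ range (N + 1)) :
    battleValue α K N τ k x = valueAgainst α p x := by
  have hfilter : {y ∈ range (N + 1) | y < x} = range x := by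
    ext y
    simp only [mem_filter, mem_range] at hx ⊢
    omega
  simp only [battleValue, winTie, hτ, mul_add, mul_ite, mul_one, mul_zero, sum_add_distrib,
    sum_ite_eq, if_pos hx, ← sum_filter, hfilter, valueAgainst, mul_comm (p x)]

lemma sum_range_two_mul {M : Type*} [AddCommMonoid M] (f : ℕ → M) (n : ℕ) :
    ∑ x ∈ range (2 * n), f x = ∑ i ∈ range n, (f (2 * i) + f (2 * i + 1)) := by
  induction n with
  | zero => simp
  | succ n ih => rw [mul_add_one, sum_range_succ, sum_range_succ, ih, sum_range_succ, add_assoc]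

noncomputable def evenUniform (m x : ℕ) : ℝ :=
  if x % 2 = 0 ∧ x ≤ 2 * m then (1 : ℝ) / (m + 1) else 0

noncomputable def oddUniform (m x : ℕ) : ℝ :=
  if x % 2 = 1 ∧ x < 2 * m then (1 : ℝ) / m else 0

variable {m j : ℕ}

lemma sum_range_evenUniform (hj : j ≤ m + 1) :
    ∑ y ∈ range (2 * j), evenUniform m y = j / (m + 1) := by
  rw [sum_range_two_mul, sum_congr rfl fun i hi => ?_, sum_const, card_range, nsmul_eq_mul,
    mul_one_div]
  have := mem_range.1 hi
  simp only [evenUniform]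
  rw [if_pos (by omega), if_neg (by omega), add_zero]

lemma sum_range_oddUniform (hj : j ≤ m) :
    ∑ y ∈ range (2 * j), oddUniform m y = j / m := by
  rw [sum_range_two_mul, sum_congr rfl fun i hi => ?_, sum_const, card_range, nsmul_eq_mul,
    mul_one_div]
  have := mem_range.1 hi
  simp only [oddUniform]
  rw [if_neg (by omega), if_pos (by omega), zero_add]

lemma valueAgainst_evenUniform_two_mul (α : ℝ) (hj : j ≤ m) :
    valueAgainst α (evenUniform m) (2 * j) = (j + α / 2) / (m + 1) := by
  rw [valueAgainst, sum_range_evenUniform (by omega), evenUniform, if_pos (by omega)]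
  ring

lemma valueAgainst_evenUniform_two_mul_add_one (α : ℝ) (hj : j ≤ m) :
    valueAgainst α (evenUniform m) (2 * j + 1) = (j + 1) / (m + 1) := by
  rw [valueAgainst, sum_range_succ, sum_range_evenUniform (by omega), evenUniform, evenUniform,
    if_pos (by omega), if_neg (by omega)]
  ring

lemma valueAgainst_oddUniform_two_mul (α : ℝ) (hj : j ≤ m) :
    valueAgainst α (oddUniform m) (2 * j) = j / m := by
  rw [valueAgainst, sum_range_oddUniform hj, oddUniform, if_neg (by omega), mul_zero, add_zero]

def alternate (a b : ℕ) : Fin K → ℕ := fun k => if Even (k : ℕ) then a else b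

lemma sum_alternate {M : Type*} [AddCommMonoid M] {n : ℕ} (hK : K = 2 * n) (a b : ℕ)
    (g : ℕ → M) : ∑ k : Fin K, g (alternate a b k) = n • (g a + g b) := by
  simp only [alternate]
  rw [Fin.sum_univ_eq_sum_range (fun i => g (if Even i then a else b)) K, hK, sum_range_two_mul]
  simp

lemma alternate_mem_pureStrats {n a b : ℕ} (hK : K = 2 * n) (hN : N = m * K)
    (hab : a + b = 2 * m) : alternate a b ∈ pureStrats K N := by
  rw [mem_pureStrats]
  calc ∑ k, alternate a b k = n • (a + b) := sum_alternate hK a b id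
    _ = N := by rw [hab, hN, hK, smul_eq_mul]; ring

lemma expPayoff_alternate (α : ℝ) {n a b : ℕ} (hK : K = 2 * n) (hN : N = m * K)
    (hab : a + b = 2 * m) {τ : (Fin K → ℕ) → ℝ} {p : ℕ → ℝ}
    (hτ : ∀ k x, marginal K N τ k x = p x) :
    expPayoff α K N (Pi.single (alternate a b) 1) τ =
      n * (valueAgainst α p a + valueAgainst α p b) := by
  have hmem := alternate_mem_pureStrats hK hN hab
  rw [expPayoff_pi_single α hmem, sum_congr rfl fun k _ =>
    battleValue_eq_valueAgainst hτ k (apply_mem_range_of_mem_pureStrats hmem k),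
    sum_alternate hK a b, nsmul_eq_mul]

lemma expTies_self_pos {σ : (Fin K → ℕ) → ℝ} {p : ℕ → ℝ}
    (hσ : ∀ k x, marginal K N σ k x = p x) (hK : 0 < K) {x₀ : ℕ} (hx₀ : x₀ ≤ N)
    (hp : p x₀ ≠ 0) : 0 < expTies K N σ σ := by
  simp only [expTies, hσ]
  exact sum_pos (fun k _ => sum_pos' (fun x _ => mul_self_nonneg _)
    ⟨x₀, mem_range.2 (Nat.lt_succ_of_le hx₀), mul_self_pos.2 hp⟩) ⟨⟨0, hK⟩, mem_univ _⟩

lemma expTies_eq_zero_of_oddUniform_evenUniform {σ τ : (Fin K → ℕ) → ℝ}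
    (hσ : OddUniformMarginals K N m σ) (hτ : EvenUniformMarginals K N m τ) :
    expTies K N σ τ = 0 := by
  refine sum_eq_zero fun k _ => sum_eq_zero fun x _ => ?_
  rw [hσ, hτ]
  split_ifs <;> first | omega | simp

theorem not_isNashEq_of_evenUniformMarginals {α : ℝ} (hα : α < 1) {n : ℕ} (hn : 0 < n)
    (hm : 1 ≤ m) (hK : K = 2 * n) (hN : N = m * K) {σ : (Fin K → ℕ) → ℝ}
    (hσ : EvenUniformMarginals K N m σ) : ¬ IsNashEq α K N σ σ := by
  rintro ⟨hmix, -, hbest, -⟩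
  have hab : 1 + (2 * (m - 1) + 1) = 2 * m := by omega
  have hval : valueAgainst α (evenUniform m) 1 +
      valueAgainst α (evenUniform m) (2 * (m - 1) + 1) = 1 := by
    rw [valueAgainst_evenUniform_two_mul_add_one α (j := 0) (Nat.zero_le m),
      valueAgainst_evenUniform_two_mul_add_one α (Nat.sub_le m 1)]
    push_cast [Nat.cast_sub hm]
    field_simp
    ring
  have hdev := hbest _ (isMixed_pi_single (alternate_mem_pureStrats hK hN hab))
  rw [expPayoff_alternate α hK hN hab (p := evenUniform m) hσ, hval, mul_one] at hdev
  have hsum := expPayoff_add_expPayoff_swap α hmix.2.2 hmix.2.2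
  have hties := expTies_self_pos (p := evenUniform m) hσ (by omega) (Nat.zero_le N)
    (by rw [evenUniform, if_pos (by omega)]; positivity)
  have hloss := mul_neg_of_neg_of_pos (sub_neg.2 hα) hties
  have hKR : (K : ℝ) = 2 * n := by exact_mod_cast hK
  linarith

theorem not_isNashEq_of_oddUniform_evenUniform {α : ℝ} (hα : 1 < α) {n : ℕ} (hn : 0 < n)
    (hm : 1 ≤ m) (hK : K = 2 * n) (hN : N = m * K) {σA σB : (Fin K → ℕ) → ℝ}
    (hA : OddUniformMarginals K N m σA) (hB : EvenUniformMarginals K N m σB) :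
    ¬ IsNashEq α K N σA σB := by
  rintro ⟨hmixA, hmixB, hbestA, hbestB⟩
  have hvalA : valueAgainst α (evenUniform m) 0 + valueAgainst α (evenUniform m) (2 * m) =
      1 + (α - 1) / (m + 1) := by
    rw [← Nat.mul_zero 2, valueAgainst_evenUniform_two_mul α (Nat.zero_le m),
      valueAgainst_evenUniform_two_mul α le_rfl]
    field_simp
    push_cast
    ring
  have hvalB : valueAgainst α (oddUniform m) (2 * m) + valueAgainst α (oddUniform m) 0 = 1 := by
    rw [← Nat.mul_zero 2, valueAgainst_oddUniform_two_mul α le_rfl,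
      valueAgainst_oddUniform_two_mul α (Nat.zero_le m), Nat.cast_zero, zero_div, add_zero,
      div_self (by positivity)]
  have hdevA := hbestA _ (isMixed_pi_single (alternate_mem_pureStrats hK hN (zero_add (2 * m))))
  rw [expPayoff_alternate α hK hN (zero_add (2 * m)) (p := evenUniform m) hB, hvalA,
    mul_one_add] at hdevA
  have hdevB := hbestB _ (isMixed_pi_single (alternate_mem_pureStrats hK hN (add_zero (2 * m))))
  rw [expPayoff_alternate α hK hN (add_zero (2 * m)) (p := oddUniform m) hA, hvalB,
    mul_one] at hdevB
  have hsum := expPayoff_add_expPayoff_swap α hmixA.2.2 hmixB.2.2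
  rw [expTies_eq_zero_of_oddUniform_evenUniform hA hB] at hsum
  have hgain : 0 < (n : ℝ) * ((α - 1) / (m + 1)) := by
    have : (0 : ℝ) < α - 1 := by linarith
    positivity
  have hKR : (K : ℝ) = 2 * n := by exact_mod_cast hK
  linarith

end Blotto

theorem stmt17 (K m N : ℕ) (hK : 2 ≤ K) (hKeven : Even K) (hm : 1 ≤ m) (hN : N = m * K) :
    (∀ α : ℝ, 0 ≤ α → α < 1 → ∀ σ, IsMixed K N σ → EvenUniformMarginals K N m σ →
      ¬ IsNashEq α K N σ σ) ∧
    (∀ α : ℝ, 1 < α → α ≤ 2 → ∀ σA σB, IsMixed K N σA → IsMixed K N σB →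
      OddUniformMarginals K N m σA → EvenUniformMarginals K N m σB →
      ¬ IsNashEq α K N σA σB) := by
  obtain ⟨n, hKn⟩ := hKeven
  have hK2 : K = 2 * n := by omega
  exact ⟨fun α _ hα σ _ hσ =>
      Blotto.not_isNashEq_of_evenUniformMarginals hα (by omega) hm hK2 hN hσ,
    fun α hα _ σA σB _ _ hA hB =>
      Blotto.not_isNashEq_of_oddUniform_evenUniform hα (by omega) hm hK2 hN hA hB⟩
end
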